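/- arXiv:2311.03549 — 2 statements merged into one kernel-verified Lean document; each statement's English description precedes it below -/
import Mathlib

section
/- Let n ≥ 1, α ∈ [n]^n, and let ρ = (r_1,…,r_n) and ρ' = (r_1',…,r_n') be vectors with r_i, r_i' ∈ {0,1,…,n} and r_i ≤ r_i' for all i ∈ [n]. If ρ is a parking strategy for α, i.e. (α,ρ) ∈ PR_n, then (α,ρ') ∈ PR_n. -/
open Finset

/-- The spot where a single car parks on a one-way street with spots `1,…,n`:
`occ` is the set of already occupied spots, `p` is the car's preference, and
`r` is its backward allowance (it follows the `r`-Naples rule).  If spot `p`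
is free the car parks there; otherwise it checks spots `p-1, p-2, …, max (p-r) 1`
and parks in the first free one among these; otherwise it parks in the smallest
free spot `> p` (and `≤ n`); `none` means the car fails to park. -/
def parkSpot (n : ℕ) (occ : Finset ℕ) (p r : ℕ) : Option ℕ :=
  if p ∈ occ then
    if hb : ((Finset.Ico (max 1 (p - r)) p).filter (fun j => j ∉ occ)).Nonempty then
      some (((Finset.Ico (max 1 (p - r)) p).filter (fun j => j ∉ occ)).max' hb)
    else if hf : ((Finset.Ioc p n).filter (fun j => j ∉ occ)).Nonempty then
      some (((Finset.Ioc p n).filter (fun j => j ∉ occ)).min' hf)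
    else none
  else some p

/-- The set of occupied spots after the first `i` of the `m` cars (with
preferences `a` and backward allowances `r`) have attempted to park on a
street with `n` spots. -/
def occUpTo (n m : ℕ) (a r : Fin m → ℕ) : ℕ → Finset ℕ
  | 0 => ∅
  | i + 1 =>
    let occ := occUpTo n m a r i
    if h : i < m then
      match parkSpot n occ (a ⟨i, h⟩) (r ⟨i, h⟩) with
      | some s => insert s occ
      | none => occ
    else occ

/-- The outcome map: the spot where car `c_i` parks (`none` if it fails to park),
when the `m` cars with preferences `a` park on `n` spots, car `c_i` following
the `r i`-Naples rule. -/
def outcome (n m : ℕ) (a r : Fin m → ℕ) (i : Fin m) : Option ℕ :=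
  parkSpot n (occUpTo n m a r i.val) (a i) (r i)

/-- The outcome map with values in `ℕ∞`: failure to park is recorded as `∞`. -/
def outcomeE (n m : ℕ) (a r : Fin m → ℕ) (i : Fin m) : ENat :=
  (outcome n m a r i).elim ⊤ (fun s => (s : ENat))

/-- All `m` cars (preferences `a`, car `c_i` following the `r i`-Naples rule)
are able to park on the street with `n` spots.  For `m = n` this says that `r`
is a parking strategy for `a`, i.e. `(a, r) ∈ PR_n`. -/
def AllPark (n m : ℕ) (a r : Fin m → ℕ) : Prop :=
  ∀ i : Fin m, (outcome n m a r i).isSome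

instance (n m : ℕ) (a r : Fin m → ℕ) : Decidable (AllPark n m a r) := by
  unfold AllPark; infer_instance

/-- `a ∈ PF_{n,k}`: `a` is a `k`-Naples parking function of length `n`. -/
def NaplesPF (n k : ℕ) (a : Fin n → ℕ) : Prop :=
  AllPark n n a (fun _ => k)

instance (n k : ℕ) (a : Fin n → ℕ) : Decidable (NaplesPF n k a) := by
  unfold NaplesPF; infer_instance

/-- `a ∈ PF_n`: `a` is a (standard) parking function of length `n`. -/
def IsPF (n : ℕ) (a : Fin n → ℕ) : Prop := NaplesPF n 0 a

instance (n : ℕ) (a : Fin n → ℕ) : Decidable (IsPF n a) := by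
  unfold IsPF; infer_instance

/-- `u_α(j) = Σ_{i=j}^n |α|_i − (n−j+1) = #{i : a_i ≥ j} − (n−j+1)`. -/
def ucount (n : ℕ) (a : Fin n → ℕ) (j : ℕ) : ℤ :=
  ((Finset.univ.filter (fun i : Fin n => j ≤ a i)).card : ℤ) - ((n : ℤ) - (j : ℤ) + 1)

/-- `U_α = {j ∈ [n] : u_α(j) ≥ 1}`. -/
def Uset (n : ℕ) (a : Fin n → ℕ) : Finset ℕ :=
  (Finset.Icc 1 n).filter (fun j => 1 ≤ ucount n a j)

/-- A parking preference of length `n` is complete if `U_α = {2,…,n}`. -/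
def Complete (n : ℕ) (a : Fin n → ℕ) : Prop :=
  Uset n a = Finset.Icc 2 n

instance (n : ℕ) (a : Fin n → ℕ) : Decidable (Complete n a) := by
  unfold Complete; infer_instance

/-- `[p,q]` is a maximal interval of `U_α`. -/
def MaxInterval (n : ℕ) (a : Fin n → ℕ) (p q : ℕ) : Prop :=
  p ≤ q ∧ (∀ j, p ≤ j → j ≤ q → j ∈ Uset n a) ∧ p - 1 ∉ Uset n a ∧ q + 1 ∉ Uset n a

/-! Compare the processes under `ρ` and `ρ'` car by car through the tail counts
`#{occupied spots ≥ t}`; the invariant is that every tail count under `ρ'` is at most the one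
under `ρ`.  A car fails to park only if every spot from the leftmost one it checks up to `n` is
occupied; by the invariant this would also happen under `ρ`, whose window is smaller.  If a car
with preference `p` parks at `s` under `ρ` and at `s'` under `ρ'`, the invariant survives because
for `s < t ≤ s'` the tail count at `t` under `ρ'` is strictly smaller: either all of `[t, p]` is
occupied under `ρ` while `s'` is a free spot there under `ρ'`, or all of `[s, t)` is occupied
under `ρ'` while `s` is free under `ρ`. -/

def tailCount (A : Finset ℕ) (t : ℕ) : ℕ := #{j ∈ A | t ≤ j}

lemma tailCount_eq_card_inter_Ico_add (A : Finset ℕ) {u v : ℕ} (h : u ≤ v) :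
    tailCount A u = #(A ∩ Ico u v) + tailCount A v := by
  rw [tailCount, tailCount, ← card_union_of_disjoint]
  · congr 1
    ext j
    simp only [mem_filter, mem_union, mem_inter, mem_Ico]
    grind
  · rw [disjoint_left]
    intro j
    simp only [mem_filter, mem_inter, mem_Ico]
    grind

lemma tailCount_insert {A : Finset ℕ} {x : ℕ} (hx : x ∉ A) (t : ℕ) :
    tailCount (insert x A) t = tailCount A t + if t ≤ x then 1 else 0 := by
  rw [tailCount, tailCount, filter_insert]
  split_ifs with h
  · rw [card_insert_of_notMem (by simp [hx])]
  · rfl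

lemma tailCount_add_lt_of_Ico_subset {A B : Finset ℕ} {u v x : ℕ} (hA : Ico u v ⊆ A)
    (hx : x ∈ Ico u v) (hxB : x ∉ B) :
    tailCount B u + tailCount A v < tailCount A u + tailCount B v := by
  have huv : u ≤ v := by grind
  have hAcard : #(A ∩ Ico u v) = v - u := by
    rw [inter_eq_right.2 hA, Nat.card_Ico]
  have hBcard : #(B ∩ Ico u v) < v - u := by
    rw [← Nat.card_Ico]
    exact card_lt_card ⟨inter_subset_right, fun h => hxB (mem_of_mem_inter_left (h hx))⟩
  rw [tailCount_eq_card_inter_Ico_add A huv, tailCount_eq_card_inter_Ico_add B huv]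
  omega

lemma Icc_subset_of_tailCount_le {A B : Finset ℕ} {w n : ℕ} (hA : A ⊆ Iic n)
    (hB : Icc w n ⊆ B) (h : tailCount B w ≤ tailCount A w) : Icc w n ⊆ A := by
  have hAw : {j ∈ A | w ≤ j} ⊆ Icc w n := fun j hj => by
    have := hA (mem_filter.1 hj).1
    simp only [mem_filter, mem_Icc, mem_Iic] at hj this ⊢
    omega
  have hBw : Icc w n ⊆ {j ∈ B | w ≤ j} := fun j hj =>
    mem_filter.2 ⟨hB hj, (mem_Icc.1 hj).1⟩
  rw [← eq_of_subset_of_card_le hAw ((card_le_card hBw).trans h)]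
  exact filter_subset _ _

lemma tailCount_insert_le {A B : Finset ℕ} {s s' : ℕ} (hs : s ∉ A) (hs' : s' ∉ B)
    (hle : ∀ t, tailCount B t ≤ tailCount A t)
    (hlt : ∀ t, s < t → t ≤ s' → tailCount B t < tailCount A t) (t : ℕ) :
    tailCount (insert s' B) t ≤ tailCount (insert s A) t := by
  rw [tailCount_insert hs, tailCount_insert hs']
  have := hle t
  split_ifs with hts' hts
  all_goals first | omega | have := hlt t (by omega) hts'; omega

section parkSpot

variable {n : ℕ} {occ : Finset ℕ} {p r s : ℕ}

lemma parkSpot_eq_some_cases (h : parkSpot n occ p r = some s) :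
    s ∉ occ ∧
      (s = p ∨
        (p ∈ occ ∧ max 1 (p - r) ≤ s ∧ s < p ∧ ∀ j, s < j → j < p → j ∈ occ) ∨
        (p ∈ occ ∧ p < s ∧ s ≤ n ∧ (∀ j, max 1 (p - r) ≤ j → j < p → j ∈ occ) ∧
          ∀ j, p < j → j < s → j ∈ occ)) := by
  unfold parkSpot at h
  split_ifs at h with hp hback hfwd <;> rw [Option.some_inj] at h <;> subst h
  · have hmem := max'_mem _ hback
    simp only [mem_filter, mem_Ico] at hmem
    refine ⟨hmem.2, .inr (.inl ⟨hp, hmem.1.1, hmem.1.2, fun j hsj hjp => ?_⟩)⟩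
    by_contra hj
    have hj' : j ∈ {j ∈ Ico (max 1 (p - r)) p | j ∉ occ} :=
      mem_filter.2 ⟨mem_Ico.2 ⟨by omega, hjp⟩, hj⟩
    have := le_max' _ j hj'
    omega
  · have hmem := min'_mem _ hfwd
    simp only [mem_filter, mem_Ioc] at hmem
    refine ⟨hmem.2, .inr (.inr ⟨hp, hmem.1.1, hmem.1.2, fun j hwj hjp => ?_, fun j hpj hjs => ?_⟩)⟩
    · by_contra hj
      exact hback ⟨j, mem_filter.2 ⟨mem_Ico.2 ⟨hwj, hjp⟩, hj⟩⟩
    · by_contra hj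
      have hj' : j ∈ {j ∈ Ioc p n | j ∉ occ} := mem_filter.2 ⟨mem_Ioc.2 ⟨hpj, by omega⟩, hj⟩
      have := min'_le _ j hj'
      omega
  · exact ⟨hp, .inl rfl⟩

lemma parkSpot_notMem (h : parkSpot n occ p r = some s) : s ∉ occ :=
  (parkSpot_eq_some_cases h).1

lemma le_parkSpot (hp : 1 ≤ p) (h : parkSpot n occ p r = some s) : max 1 (p - r) ≤ s := by
  obtain ⟨-, rfl | ⟨-, hs, -⟩ | ⟨-, hps, -⟩⟩ := parkSpot_eq_some_cases h <;> omega

lemma parkSpot_le (hpn : p ≤ n) (h : parkSpot n occ p r = some s) : s ≤ n := by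
  obtain ⟨-, rfl | ⟨-, -, hsp, -⟩ | ⟨-, -, hsn, -⟩⟩ := parkSpot_eq_some_cases h <;> omega

lemma mem_of_parkSpot_lt_of_le (h : parkSpot n occ p r = some s) {j : ℕ} (hsj : s < j)
    (hjp : j ≤ p) : j ∈ occ := by
  obtain ⟨-, rfl | ⟨hp, -, -, hgap⟩ | ⟨-, hps, -⟩⟩ := parkSpot_eq_some_cases h
  · omega
  · rcases hjp.lt_or_eq with hjp | rfl
    exacts [hgap j hsj hjp, hp]
  · omega

lemma mem_of_lt_parkSpot (h : parkSpot n occ p r = some s) (hps : p < s) {j : ℕ}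
    (hwj : max 1 (p - r) ≤ j) (hjs : j < s) : j ∈ occ := by
  obtain ⟨-, rfl | ⟨-, -, hsp, -⟩ | ⟨hp, -, -, hback, hfwd⟩⟩ := parkSpot_eq_some_cases h
  · omega
  · omega
  · rcases lt_trichotomy j p with hjp | rfl | hpj
    exacts [hback j hwj hjp, hp, hfwd j hpj hjs]

lemma parkSpot_eq_none_iff (hp : p ∈ Icc 1 n) :
    parkSpot n occ p r = none ↔ Icc (max 1 (p - r)) n ⊆ occ := by
  rw [mem_Icc] at hp
  unfold parkSpot
  constructor
  · intro h j hj
    rw [mem_Icc] at hj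
    split_ifs at h with hpocc hback hfwd
    rcases lt_trichotomy j p with hjp | rfl | hpj
    · by_contra hjocc
      exact hback ⟨j, mem_filter.2 ⟨mem_Ico.2 ⟨hj.1, hjp⟩, hjocc⟩⟩
    · exact hpocc
    · by_contra hjocc
      exact hfwd ⟨j, mem_filter.2 ⟨mem_Ioc.2 ⟨hpj, hj.2⟩, hjocc⟩⟩
  · intro hfull
    have hmem : ∀ j, max 1 (p - r) ≤ j → j ≤ n → j ∈ occ := fun j h₁ h₂ =>
      hfull (mem_Icc.2 ⟨h₁, h₂⟩)
    have hback : ¬ {j ∈ Ico (max 1 (p - r)) p | j ∉ occ}.Nonempty := by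
      rintro ⟨j, hj⟩
      simp only [mem_filter, mem_Ico] at hj
      exact hj.2 (hmem j hj.1.1 (by omega))
    have hfwd : ¬ {j ∈ Ioc p n | j ∉ occ}.Nonempty := by
      rintro ⟨j, hj⟩
      simp only [mem_filter, mem_Ioc] at hj
      exact hj.2 (hmem j (by omega) hj.1.2)
    rw [if_pos (hmem p (by omega) hp.2), dif_neg hback, dif_neg hfwd]

end parkSpot

section Comparison

variable {n p r r' s s' : ℕ} {occ occ' : Finset ℕ}

lemma parkSpot_isSome_of_tailCount_le (hocc : occ ⊆ Iic n)
    (hle : ∀ t, tailCount occ' t ≤ tailCount occ t) (hp : p ∈ Icc 1 n) (hr : r ≤ r')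
    (h : (parkSpot n occ p r).isSome) : (parkSpot n occ' p r').isSome := by
  rw [Option.isSome_iff_ne_none, ne_eq, parkSpot_eq_none_iff hp] at h ⊢
  intro hfull'
  exact h ((Icc_subset_Icc_left (by omega)).trans (Icc_subset_of_tailCount_le hocc hfull' (hle _)))

lemma tailCount_lt_of_parkSpot (hle : ∀ t, tailCount occ' t ≤ tailCount occ t) (hp : 1 ≤ p)
    (hr : r ≤ r') (hs : parkSpot n occ p r = some s) (hs' : parkSpot n occ' p r' = some s')
    {t : ℕ} (hst : s < t) (hts' : t ≤ s') : tailCount occ' t < tailCount occ t := by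
  rcases le_or_gt s' p with hs'p | hps'
  · have hsub : Ico t (p + 1) ⊆ occ := fun j hj =>
      mem_of_parkSpot_lt_of_le hs (by grind) (by grind)
    have := tailCount_add_lt_of_Ico_subset hsub (mem_Ico.2 ⟨hts', by omega⟩) (parkSpot_notMem hs')
    have := hle (p + 1)
    omega
  · have hws : max 1 (p - r') ≤ s := le_trans (by omega) (le_parkSpot hp hs)
    have hsub : Ico s t ⊆ occ' := fun j hj =>
      mem_of_lt_parkSpot hs' hps' (by grind) (by grind)
    have := tailCount_add_lt_of_Ico_subset hsub (mem_Ico.2 ⟨le_rfl, hst⟩) (parkSpot_notMem hs)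
    have := hle s
    omega

end Comparison

section occUpTo

variable {n m : ℕ} {a r : Fin m → ℕ}

lemma occUpTo_succ_of_outcome_eq_some {i : Fin m} {s : ℕ} (h : outcome n m a r i = some s) :
    occUpTo n m a r (i + 1) = insert s (occUpTo n m a r i) := by
  rw [outcome] at h
  rw [occUpTo, dif_pos i.isLt, h]

lemma occUpTo_subset_Iic (ha : ∀ i, a i ≤ n) : ∀ k, occUpTo n m a r k ⊆ Iic n
  | 0 => empty_subset _
  | k + 1 => by
    rw [occUpTo]
    split_ifs with hk
    · split
      next s hs => exact insert_subset (mem_Iic.2 (parkSpot_le (ha _) hs)) (occUpTo_subset_Iic ha k)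
      next => exact occUpTo_subset_Iic ha k
    · exact occUpTo_subset_Iic ha k

lemma tailCount_occUpTo_le {r' : Fin m → ℕ} (ha : ∀ i, a i ∈ Icc 1 n)
    (hle : ∀ i, r i ≤ r' i) (hpark : AllPark n m a r) :
    ∀ k ≤ m, ∀ t, tailCount (occUpTo n m a r' k) t ≤ tailCount (occUpTo n m a r k) t
  | 0, _, _ => le_rfl
  | k + 1, hk, t => by
    have ih := tailCount_occUpTo_le ha hle hpark k (by omega)
    let i : Fin m := ⟨k, hk⟩
    obtain ⟨s, hs⟩ := Option.isSome_iff_exists.1 (hpark i)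
    obtain ⟨s', hs'⟩ := Option.isSome_iff_exists.1 <| parkSpot_isSome_of_tailCount_le
      (occUpTo_subset_Iic (fun i => (mem_Icc.1 (ha i)).2) k) ih (ha i) (hle i) (hpark i)
    rw [occUpTo_succ_of_outcome_eq_some (i := i) hs, occUpTo_succ_of_outcome_eq_some (i := i) hs']
    exact tailCount_insert_le (parkSpot_notMem hs) (parkSpot_notMem hs') ih
      (fun _ => tailCount_lt_of_parkSpot ih (mem_Icc.1 (ha i)).1 (hle i) hs hs') t

end occUpTo

theorem statement16_general (n : ℕ) (a : Fin n → ℕ)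
    (ha : ∀ i, a i ∈ Finset.Icc 1 n) (r r' : Fin n → ℕ)
    (hle : ∀ i, r i ≤ r' i)
    (hstrat : AllPark n n a r) :
    AllPark n n a r' := fun i =>
  parkSpot_isSome_of_tailCount_le (occUpTo_subset_Iic (fun i => (mem_Icc.1 (ha i)).2) i)
    (tailCount_occUpTo_le ha hle hstrat i i.isLt.le) (ha i) (hle i) (hstrat i)

/-- if `ρ ≤ ρ'` componentwise (values in `{0,…,n}`) and `ρ` is a
parking strategy for `α`, then so is `ρ'`. -/
theorem statement16 (n : ℕ) (hn : 1 ≤ n) (a : Fin n → ℕ)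
    (ha : ∀ i, a i ∈ Finset.Icc 1 n) (r r' : Fin n → ℕ)
    (hr' : ∀ i, r' i ≤ n) (hle : ∀ i, r i ≤ r' i)
    (hstrat : AllPark n n a r) :
    AllPark n n a r' :=
  statement16_general n a ha r r' hle hstrat
end

section
/- Let n ≥ 1 and α ∈ [n]^n. Then the minimum of |ρ| = Σ_{i=1}^n r_i over all parking strategies ρ for α equals Σ_{j ∈ U_α} u_α(j). That is: (a) every ρ ∈ {0,1,…,n}^n with (α,ρ) ∈ PR_n satisfies Σ_{i=1}^n r_i ≥ Σ_{j ∈ U_α} u_α(j); and (b) there exists ρ ∈ {0,1,…,n}^n with (α,ρ) ∈ PR_n and Σ_{i=1}^n r_i = Σ_{j ∈ U_α} u_α(j). -/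
open Finset

/-! If car `c_i` parks in spot `s_i` then `a_i ≤ s_i + r_i`. Since the `s_i` fill `[n]`, for every
`j` at least `u_α(j)` of the cars with `a_i ≥ j` park below `j`; counting these boundary crossings
gives `Σ_{j ∈ U_α} u_α(j) ≤ Σ_i (a_i - s_i)⁺ ≤ Σ_i r_i`.

The bound is attained by a greedy strategy. A car whose preferred spot is free parks there;
otherwise it drives forward if there are more free spots than remaining cars above its preference,
and backs up to the nearest free spot if not. A backward move of length `r` lowers the potential
`Σ_j max(surplus_j, 0)` by exactly `r`, and no other move changes it; the potential starts at
`Σ_{j ∈ U_α} u_α(j)` and ends at `0`. -/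

section Parking

variable {n m : ℕ} {a r : Fin m → ℕ} {occ : Finset ℕ} {p q s : ℕ}

lemma parkSpot_spec (h : parkSpot n occ p q = some s) :
    s ∉ occ ∧ (s = p ∨ max 1 (p - q) ≤ s ∧ s < p ∨ p < s ∧ s ≤ n) := by
  unfold parkSpot at h
  split_ifs at h with hp hb hf
  · obtain rfl := Option.some.inj h
    have hs := mem_filter.mp (max'_mem _ hb)
    rw [mem_Ico] at hs
    exact ⟨hs.2, Or.inr (Or.inl hs.1)⟩
  · obtain rfl := Option.some.inj h
    have hs := mem_filter.mp (min'_mem _ hf)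
    rw [mem_Ioc] at hs
    exact ⟨hs.2, Or.inr (Or.inr hs.1)⟩
  · obtain rfl := Option.some.inj h
    exact ⟨hp, Or.inl rfl⟩

lemma parkSpot_of_notMem (hp : p ∉ occ) : parkSpot n occ p q = some p := by
  simp [parkSpot, hp]

lemma parkSpot_sub_of_gap {b : ℕ} (hp : p ∈ occ) (hb : 1 ≤ b) (hbp : b < p) (hbocc : b ∉ occ)
    (hgap : ∀ u, b < u → u < p → u ∈ occ) : parkSpot n occ p (p - b) = some b := by
  have hfree : {t ∈ Ico (max 1 (p - (p - b))) p | t ∉ occ} = {b} := by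
    ext t
    simp only [mem_filter, mem_Ico, mem_singleton]
    constructor
    · rintro ⟨⟨ht, htp⟩, htocc⟩
      by_contra htb
      exact htocc (hgap t (by omega) htp)
    · rintro rfl
      exact ⟨⟨by omega, hbp⟩, hbocc⟩
  simp [parkSpot, hp, hfree]

lemma parkSpot_zero_of_gap {f : ℕ} (hp : p ∈ occ) (hpf : p < f) (hfn : f ≤ n) (hfocc : f ∉ occ)
    (hgap : ∀ u, p < u → u < f → u ∈ occ) : parkSpot n occ p 0 = some f := by
  have hf : f ∈ {t ∈ Ioc p n | t ∉ occ} := mem_filter.mpr ⟨mem_Ioc.mpr ⟨hpf, hfn⟩, hfocc⟩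
  rw [parkSpot, if_pos hp, dif_neg (by simp), dif_pos ⟨f, hf⟩, Option.some.injEq]
  refine le_antisymm (min'_le _ _ hf) (le_min' _ _ _ fun t ht => ?_)
  rw [mem_filter, mem_Ioc] at ht
  by_contra! htf
  exact ht.2 (hgap t ht.1.1 htf)

lemma occUpTo_mono : Monotone (occUpTo n m a r) := by
  refine monotone_nat_of_le_succ fun k => ?_
  simp only [occUpTo]
  split_ifs
  · split
    · exact subset_insert _ _
    · exact le_rfl
  · exact le_rfl

lemma occUpTo_succ_of_outcome {i : Fin m} (h : outcome n m a r i = some s) :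
    occUpTo n m a r (i + 1) = insert s (occUpTo n m a r i) := by
  simp only [outcome] at h
  simp [occUpTo, h]

lemma eq_of_outcome_eq_some {i j : Fin m} (hi : outcome n m a r i = some s)
    (hj : outcome n m a r j = some s) : i = j := by
  have mem_of_lt {i j : Fin m} (hij : i < j) (hi : outcome n m a r i = some s) :
      s ∈ occUpTo n m a r j :=
    occUpTo_mono (Nat.succ_le_of_lt hij) (occUpTo_succ_of_outcome hi ▸ mem_insert_self _ _)
  have notMem (j : Fin m) (hj : outcome n m a r j = some s) : s ∉ occUpTo n m a r j :=
    (parkSpot_spec hj).1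
  rcases lt_trichotomy i j with hij | rfl | hij
  · exact absurd (mem_of_lt hij hi) (notMem j hj)
  · rfl
  · exact absurd (mem_of_lt hij hj) (notMem i hi)

end Parking

section LowerBound

variable {n : ℕ} {a S : Fin n → ℕ}

lemma card_filter_le_apply_of_injective (hS : Function.Injective S)
    (hSn : ∀ i, S i ∈ Icc 1 n) {j : ℕ} (hj : 1 ≤ j) : #{i | j ≤ S i} = n + 1 - j := by
  have himage : univ.image S = Icc 1 n :=
    eq_of_subset_of_card_le (by simpa [subset_iff] using hSn)
      (by simp [card_image_of_injective _ hS])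
  have hIcc : {t ∈ Icc 1 n | j ≤ t} = Icc j n := by
    ext t
    simp only [mem_filter, mem_Icc]
    omega
  rw [← card_image_of_injective _ hS, ← filter_image, himage, hIcc, Nat.card_Icc]

lemma ucount_le_card_filter (hS : Function.Injective S) (hSn : ∀ i, S i ∈ Icc 1 n)
    {j : ℕ} (hj : j ∈ Icc 1 n) : ucount n a j ≤ #{i | S i < j ∧ j ≤ a i} := by
  obtain ⟨hj1, hjn⟩ := mem_Icc.mp hj
  have hsplit : #{i | j ≤ a i} ≤ #{i | S i < j ∧ j ≤ a i} + #{i | j ≤ S i} :=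
    (card_le_card fun i => by simp only [mem_filter, mem_union, mem_univ, true_and]; omega).trans
      (card_union_le _ _)
  rw [card_filter_le_apply_of_injective hS hSn hj1] at hsplit
  rw [ucount]
  omega

lemma sum_card_filter_le_sum_tsub (J : Finset ℕ) :
    ∑ j ∈ J, #{i | S i < j ∧ j ≤ a i} ≤ ∑ i, (a i - S i) := by
  have hswap := sum_card_bipartiteAbove_eq_sum_card_bipartiteBelow
    (r := fun i j => S i < j ∧ j ≤ a i) (s := univ) (t := J)
  simp only [bipartiteBelow] at hswap
  rw [← hswap]
  refine sum_le_sum fun i _ => (card_le_card fun j => ?_).trans (Nat.card_Ioc (S i) (a i)).le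
  simp only [bipartiteAbove, mem_filter, mem_Ioc]
  exact And.right

lemma sum_Uset_ucount_le_sum_tsub (hS : Function.Injective S) (hSn : ∀ i, S i ∈ Icc 1 n) :
    ∑ j ∈ Uset n a, ucount n a j ≤ ∑ i, ((a i - S i : ℕ) : ℤ) :=
  calc ∑ j ∈ Uset n a, ucount n a j
      ≤ ∑ j ∈ Uset n a, (#{i | S i < j ∧ j ≤ a i} : ℤ) :=
        sum_le_sum fun j hj => ucount_le_card_filter hS hSn (mem_filter.mp hj).1
    _ ≤ ∑ j ∈ Icc 1 n, (#{i | S i < j ∧ j ≤ a i} : ℤ) :=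
        sum_le_sum_of_subset_of_nonneg (filter_subset _ _) fun _ _ _ => Int.natCast_nonneg _
    _ ≤ ∑ i, ((a i - S i : ℕ) : ℤ) := by
        exact_mod_cast sum_card_filter_le_sum_tsub (Icc 1 n)

theorem sum_Uset_ucount_le_of_allPark {r : Fin n → ℕ} (ha : ∀ i, a i ∈ Icc 1 n)
    (hpark : AllPark n n a r) : ∑ j ∈ Uset n a, ucount n a j ≤ ∑ i, (r i : ℤ) := by
  set S : Fin n → ℕ := fun i => (outcome n n a r i).get (hpark i)
  have hS (i : Fin n) : outcome n n a r i = some (S i) := (Option.some_get _).symm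
  have hSpec (i : Fin n) : S i ∈ Icc 1 n ∧ a i ≤ S i + r i := by
    have := mem_Icc.mp (ha i)
    rcases (parkSpot_spec (hS i)).2 with h | h | h
    all_goals rw [mem_Icc]; omega
  have hinj : Function.Injective S := fun i j hij =>
    eq_of_outcome_eq_some (hS i) (hij ▸ hS j)
  refine (sum_Uset_ucount_le_sum_tsub hinj fun i => (hSpec i).1).trans ?_
  exact_mod_cast sum_le_sum fun i _ => Nat.sub_le_iff_le_add'.mpr (hSpec i).2

end LowerBound

def freeFrom (n : ℕ) (occ : Finset ℕ) (j : ℕ) : ℕ := #{t ∈ Icc j n | t ∉ occ}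

section Greedy

variable {n : ℕ} (a : Fin n → ℕ)

def carsFrom (i j : ℕ) : ℕ := #{l : Fin n | i ≤ l.val ∧ j ≤ a l}

/- When the cars `c_i, c_{i+1}, …` are still to park and `occ` is occupied, the positive part
of `surplus a occ i j` is the number of those cars which prefer a spot `≥ j` but must park
below `j`. -/
def surplus (occ : Finset ℕ) (i j : ℕ) : ℤ := carsFrom a i j - freeFrom n occ j

def potential (occ : Finset ℕ) (i : ℕ) : ℤ := ∑ j ∈ Icc 1 n, max (surplus a occ i j) 0

/-- This is `0` when no spot in `[1, p)` is free. -/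
def lastFreeBelow (occ : Finset ℕ) (p : ℕ) : ℕ := Nat.findGreatest (· ∉ occ) (p - 1)

def greedyR (occ : Finset ℕ) (i p : ℕ) : ℕ :=
  if p ∈ occ ∧ 0 ≤ surplus a occ i (p + 1) then p - lastFreeBelow occ p else 0

def greedyOcc : ℕ → Finset ℕ
  | 0 => ∅
  | i + 1 =>
    let occ := greedyOcc i
    if h : i < n then
      match parkSpot n occ (a ⟨i, h⟩) (greedyR a occ i (a ⟨i, h⟩)) with
      | some s => insert s occ
      | none => occ
    else occ

def greedy (i : Fin n) : ℕ := greedyR a (greedyOcc a i) i (a i)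

variable {a} {occ : Finset ℕ} {i j s b f : ℕ}

lemma lastFreeBelow_spec (h0 : 0 ∉ occ) (p : ℕ) :
    lastFreeBelow occ p ∉ occ ∧ lastFreeBelow occ p ≤ p - 1 ∧
      ∀ u, lastFreeBelow occ p < u → u < p → u ∈ occ :=
  ⟨Nat.findGreatest_spec (P := (· ∉ occ)) (Nat.zero_le _) h0, Nat.findGreatest_le _,
    fun _ hbu hup => not_not.mp (Nat.findGreatest_is_greatest hbu (by omega))⟩

lemma exists_nearest_free_above {p t : ℕ} (hpt : p < t) (ht : t ∉ occ) :
    ∃ f ≤ t, p < f ∧ f ∉ occ ∧ ∀ u, p < u → u < f → u ∈ occ := by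
  have hex : ∃ t, p < t ∧ t ∉ occ := ⟨t, hpt, ht⟩
  exact ⟨Nat.find hex, Nat.find_min' hex ⟨hpt, ht⟩, (Nat.find_spec hex).1, (Nat.find_spec hex).2,
    fun u hpu huf => not_not.mp fun hu => Nat.find_min hex huf ⟨hpu, hu⟩⟩

lemma carsFrom_eq_add (l : Fin n) (j : ℕ) :
    carsFrom a l j = carsFrom a (l + 1) j + if j ≤ a l then 1 else 0 := by
  have hsplit : ({l' : Fin n | l ≤ l'.val ∧ j ≤ a l'} : Finset (Fin n)) =
      ({l' : Fin n | l.val + 1 ≤ l'.val ∧ j ≤ a l'} : Finset (Fin n)) ∪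
        ({l' : Fin n | l' = l ∧ j ≤ a l'} : Finset (Fin n)) := by
    ext l'
    simp only [mem_filter, mem_univ, true_and, mem_union, Fin.ext_iff]
    omega
  rw [carsFrom, hsplit, card_union_of_disjoint (disjoint_filter.mpr fun l' _ h1 h2 => by
    rw [Fin.ext_iff] at h2; omega)]
  congr 1
  split_ifs with h
  · refine card_eq_one.mpr ⟨l, ?_⟩
    ext l'
    simp only [mem_filter, mem_univ, true_and, mem_singleton]
    grind
  · exact card_eq_zero.mpr (filter_eq_empty_iff.mpr fun l' _ hl' => h (hl'.1 ▸ hl'.2))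

lemma freeFrom_eq_add (hs : s ∉ occ) (hsn : s ≤ n) (j : ℕ) :
    freeFrom n occ j = freeFrom n (insert s occ) j + if j ≤ s then 1 else 0 := by
  unfold freeFrom
  split_ifs with hjs
  · rw [← card_insert_of_notMem (a := s) (s := {t ∈ Icc j n | t ∉ insert s occ}) (by simp)]
    congr 1
    ext t
    simp only [mem_insert, mem_filter, mem_Icc]
    grind
  · rw [add_zero]
    congr 1
    ext t
    simp only [mem_filter, mem_insert, mem_Icc]
    grind

lemma freeFrom_succ_of_mem (hj : j ∈ occ) : freeFrom n occ (j + 1) = freeFrom n occ j := by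
  unfold freeFrom
  congr 1
  ext t
  simp only [mem_filter, mem_Icc]
  grind

lemma surplus_insert (l : Fin n) (hs : s ∉ occ) (hsn : s ≤ n) (j : ℕ) :
    surplus a (insert s occ) (l + 1) j =
      surplus a occ l j - (if j ≤ a l then 1 else 0) + if j ≤ s then 1 else 0 := by
  simp only [surplus, carsFrom_eq_add l j, freeFrom_eq_add hs hsn j]
  push_cast
  ring

lemma surplus_succ_le_of_mem (hj : j ∈ occ) : surplus a occ i (j + 1) ≤ surplus a occ i j := by
  have hcars : carsFrom a i (j + 1) ≤ carsFrom a i j :=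
    card_le_card fun l => by simp only [mem_filter, mem_univ, true_and]; omega
  simp only [surplus, freeFrom_succ_of_mem hj]
  omega

lemma surplus_succ_lt (l : Fin n) (hl : a l ∈ occ) :
    surplus a occ l (a l + 1) < surplus a occ l (a l) := by
  have hsub : ({l' : Fin n | l ≤ l'.val ∧ a l + 1 ≤ a l'} : Finset (Fin n)) ⊆
      ({l' : Fin n | l ≤ l'.val ∧ a l ≤ a l'} : Finset (Fin n)) :=
    fun l' => by simp only [mem_filter, mem_univ, true_and]; omega
  have hcars : carsFrom a l (a l + 1) < carsFrom a l (a l) :=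
    card_lt_card <| (ssubset_iff_of_subset hsub).mpr ⟨l, by simp⟩
  simp only [surplus, freeFrom_succ_of_mem hl]
  omega

lemma surplus_le_of_forall_mem {t t' : ℕ} (htt' : t ≤ t') (hocc : ∀ u, t ≤ u → u < t' → u ∈ occ) :
    surplus a occ i t' ≤ surplus a occ i t := by
  induction t', htt' using Nat.le_induction with
  | base => exact le_rfl
  | succ k hk ih =>
    exact (surplus_succ_le_of_mem (hocc k hk (by omega))).trans
      (ih fun u h1 h2 => hocc u h1 (by omega))

lemma surplus_one (ha : ∀ l, 1 ≤ a l) (hsub : occ ⊆ Icc 1 n) (hcard : #occ = i) (hi : i ≤ n) :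
    surplus a occ i 1 = 0 := by
  have hcars : carsFrom a i 1 + i = n := by
    have := card_filter_add_card_filter_not (s := univ) (fun l : Fin n => i ≤ l.val)
    simp only [not_le, Fin.card_filter_val_lt, card_univ, Fintype.card_fin] at this
    simp only [carsFrom, ha, and_true]
    omega
  have hfree : freeFrom n occ 1 + i = n := by
    rw [freeFrom, ← sdiff_eq_filter, card_sdiff_of_subset hsub, hcard, Nat.card_Icc]
    omega
  rw [surplus]
  omega

lemma potential_insert_self (l : Fin n) (hl : a l ∉ occ) (hln : a l ≤ n) :
    potential a (insert (a l) occ) (l + 1) = potential a occ l :=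
  sum_congr rfl fun j _ => by rw [surplus_insert l hl hln, sub_add_cancel]

lemma potential_insert_of_lt (l : Fin n) (hbl : b < a l) (hln : a l ≤ n) (hb : b ∉ occ)
    (hgap : ∀ u, b < u → u < a l → u ∈ occ) (hpos : 0 < surplus a occ l (a l)) :
    potential a (insert b occ) (l + 1) + (a l - b : ℕ) = potential a occ l := by
  have hpoint : ∀ j ∈ Icc 1 n, max (surplus a (insert b occ) (l + 1) j) 0 =
      max (surplus a occ l j) 0 - if j ∈ Ioc b (a l) then 1 else 0 := by
    intro j _
    have hgap_pos : b < j → j ≤ a l → 0 < surplus a occ l j := fun hbj hjl =>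
      hpos.trans_le (surplus_le_of_forall_mem hjl fun u _ hu => hgap u (by omega) hu)
    rw [surplus_insert l hb (by omega)]
    simp only [mem_Ioc]
    split_ifs <;> omega
  have hIoc : Ioc b (a l) ⊆ Icc 1 n := fun j hj => by
    rw [mem_Ioc] at hj
    rw [mem_Icc]
    omega
  rw [potential, potential, sum_congr rfl hpoint, sum_sub_distrib, sum_ite_mem,
    inter_eq_right.mpr hIoc, sum_const, Nat.card_Ioc, nsmul_one]
  ring

lemma potential_insert_of_gt (l : Fin n) (hlf : a l < f) (hfn : f ≤ n) (hf : f ∉ occ)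
    (hgap : ∀ u, a l < u → u < f → u ∈ occ) (hneg : surplus a occ l (a l + 1) < 0) :
    potential a (insert f occ) (l + 1) = potential a occ l := by
  refine sum_congr rfl fun j _ => ?_
  rw [surplus_insert l hf hfn]
  have hgap_neg : a l < j → j ≤ f → surplus a occ l j < 0 := fun hlj hjf =>
    (surplus_le_of_forall_mem hlj fun u hu hu' => hgap u (by omega) (by omega)).trans_lt hneg
  split_ifs <;> omega

lemma exists_parkSpot_greedyR (ha : ∀ l, a l ∈ Icc 1 n) (l : Fin n) (hsub : occ ⊆ Icc 1 n)
    (hcard : #occ = l) :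
    ∃ s ∉ occ, s ∈ Icc 1 n ∧ parkSpot n occ (a l) (greedyR a occ l (a l)) = some s ∧
      potential a (insert s occ) (l + 1) + greedyR a occ l (a l) = potential a occ l := by
  obtain ⟨hl1, hln⟩ := mem_Icc.mp (ha l)
  by_cases hl : a l ∈ occ
  swap
  · have hr : greedyR a occ l (a l) = 0 := by simp [greedyR, hl]
    refine ⟨a l, hl, ha l, parkSpot_of_notMem hl, ?_⟩
    rw [hr, potential_insert_self l hl hln]
    simp
  by_cases hback : 0 ≤ surplus a occ l (a l + 1)
  · set b := lastFreeBelow occ (a l)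
    have hr : greedyR a occ l (a l) = a l - b := by simp [greedyR, hl, hback, b]
    obtain ⟨hb, hbl, hgap⟩ := lastFreeBelow_spec (fun h0 => by simpa using hsub h0) (a l)
    have hpos := (surplus_succ_lt l hl).trans_le' hback
    have hb1 : 1 ≤ b := by
      by_contra! hb0
      have := surplus_le_of_forall_mem (a := a) (i := l) hl1 fun u hu hul => hgap u (by omega) hul
      have := surplus_one (fun l => (mem_Icc.mp (ha l)).1) hsub hcard l.isLt.le
      omega
    refine ⟨b, hb, mem_Icc.mpr ⟨hb1, by omega⟩,
      hr ▸ parkSpot_sub_of_gap hl hb1 (by omega) hb hgap, ?_⟩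
    rw [hr]
    exact potential_insert_of_lt l (by omega) hln hb hgap hpos
  · have hr : greedyR a occ l (a l) = 0 := by simp [greedyR, hback]
    obtain ⟨t, ht⟩ := card_pos.mp (by rw [surplus] at hback; omega : 0 < freeFrom n occ (a l + 1))
    rw [mem_filter, mem_Icc] at ht
    obtain ⟨f, hft, hlf, hf, hgap⟩ := exists_nearest_free_above (by omega : a l < t) ht.2
    have hfn : f ≤ n := hft.trans ht.1.2
    refine ⟨f, hf, mem_Icc.mpr ⟨by omega, hfn⟩, hr ▸ parkSpot_zero_of_gap hl hlf hfn hf hgap, ?_⟩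
    rw [hr, Nat.cast_zero, add_zero]
    exact potential_insert_of_gt l hlf hfn hf hgap (not_le.mp hback)

lemma greedyOcc_succ (l : Fin n)
    (hs : parkSpot n (greedyOcc a l) (a l) (greedy a l) = some s) :
    greedyOcc a (l + 1) = insert s (greedyOcc a l) := by
  simp only [greedy] at hs
  simp [greedyOcc, hs]

lemma greedyOcc_subset_card (ha : ∀ l, a l ∈ Icc 1 n) {k : ℕ} (hk : k ≤ n) :
    greedyOcc a k ⊆ Icc 1 n ∧ #(greedyOcc a k) = k := by
  induction k with
  | zero => simp [greedyOcc]
  | succ k ih =>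
    obtain ⟨hsub, hcard⟩ := ih (by omega)
    obtain ⟨s, hs, hsI, hpark, -⟩ := exists_parkSpot_greedyR ha ⟨k, hk⟩ hsub hcard
    rw [greedyOcc_succ ⟨k, hk⟩ hpark]
    exact ⟨insert_subset hsI hsub, by rw [card_insert_of_notMem hs, hcard]⟩

lemma occUpTo_greedy : occUpTo n n a (greedy a) = greedyOcc a := by
  funext k
  induction k with
  | zero => rfl
  | succ k ih => simp only [occUpTo, greedyOcc, ih, greedy]

lemma exists_outcome_greedy (ha : ∀ l, a l ∈ Icc 1 n) (l : Fin n) :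
    ∃ s, outcome n n a (greedy a) l = some s ∧
      potential a (greedyOcc a (l + 1)) (l + 1) + greedy a l = potential a (greedyOcc a l) l := by
  obtain ⟨hsub, hcard⟩ := greedyOcc_subset_card ha l.isLt.le
  obtain ⟨s, -, -, hpark, hpot⟩ := exists_parkSpot_greedyR ha l hsub hcard
  refine ⟨s, by rw [outcome, occUpTo_greedy]; exact hpark, ?_⟩
  rw [greedyOcc_succ l hpark]
  exact hpot

lemma allPark_greedy (ha : ∀ l, a l ∈ Icc 1 n) : AllPark n n a (greedy a) := fun l => by
  obtain ⟨s, hs, -⟩ := exists_outcome_greedy ha l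
  simp [hs]

lemma potential_empty : potential a ∅ 0 = ∑ j ∈ Icc 1 n, max (ucount n a j) 0 := by
  refine sum_congr rfl fun j hj => ?_
  have hfree : freeFrom n ∅ j = n + 1 - j := by simp [freeFrom]
  simp only [surplus, carsFrom, ucount, zero_le, true_and, hfree]
  rw [mem_Icc] at hj
  omega

lemma potential_last_eq_zero (occ : Finset ℕ) : potential a occ n = 0 := by
  refine sum_eq_zero fun j _ => ?_
  have hcars : carsFrom a n j = 0 :=
    card_eq_zero.mpr (filter_eq_empty_iff.mpr fun l _ h => by omega)
  simp only [surplus, hcars]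
  omega

lemma sum_max_ucount_eq_sum_Uset :
    ∑ j ∈ Icc 1 n, max (ucount n a j) 0 = ∑ j ∈ Uset n a, ucount n a j := by
  rw [Uset, sum_filter]
  exact sum_congr rfl fun j _ => by split_ifs <;> omega

theorem sum_greedy (ha : ∀ l, a l ∈ Icc 1 n) :
    ∑ l, (greedy a l : ℤ) = ∑ j ∈ Uset n a, ucount n a j := by
  set Φ : ℕ → ℤ := fun k => potential a (greedyOcc a k) k
  have hstep (l : Fin n) : (greedy a l : ℤ) = Φ l - Φ (l + 1) := by
    obtain ⟨s, -, h⟩ := exists_outcome_greedy ha l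
    simp only [Φ]
    omega
  rw [sum_congr rfl fun l _ => hstep l, Fin.sum_univ_eq_sum_range (fun k => Φ k - Φ (k + 1)),
    sum_range_sub', ← sum_max_ucount_eq_sum_Uset, ← potential_empty]
  simp [Φ, greedyOcc, potential_last_eq_zero]

lemma greedy_le (l : Fin n) : greedy a l ≤ a l := by
  unfold greedy greedyR
  split_ifs <;> omega

end Greedy

theorem statement17_general (n : ℕ) (a : Fin n → ℕ)
    (ha : ∀ i, a i ∈ Finset.Icc 1 n) :
    (∀ r : Fin n → ℕ, (∀ i, r i ≤ n) → AllPark n n a r →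
      (∑ j ∈ Uset n a, ucount n a j) ≤ ∑ i : Fin n, (r i : ℤ)) ∧
    (∃ r : Fin n → ℕ, (∀ i, r i ≤ n) ∧ AllPark n n a r ∧
      (∑ i : Fin n, (r i : ℤ)) = ∑ j ∈ Uset n a, ucount n a j) :=
  ⟨fun _ _ hpark => sum_Uset_ucount_le_of_allPark ha hpark,
    greedy a, fun i => (greedy_le i).trans (mem_Icc.mp (ha i)).2, allPark_greedy ha, sum_greedy ha⟩

/-- the minimum of `|ρ| = Σ r_i` over parking strategies `ρ` for
`α` is `Σ_{j ∈ U_α} u_α(j)`: (a) every parking strategy satisfies the lower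
bound, and (b) it is attained. -/
theorem statement17 (n : ℕ) (hn : 1 ≤ n) (a : Fin n → ℕ)
    (ha : ∀ i, a i ∈ Finset.Icc 1 n) :
    (∀ r : Fin n → ℕ, (∀ i, r i ≤ n) → AllPark n n a r →
      (∑ j ∈ Uset n a, ucount n a j) ≤ ∑ i : Fin n, (r i : ℤ)) ∧
    (∃ r : Fin n → ℕ, (∀ i, r i ≤ n) ∧ AllPark n n a r ∧
      (∑ i : Fin n, (r i : ℤ)) = ∑ j ∈ Uset n a, ucount n a j) :=
  statement17_general n a ha
end
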